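/- arXiv:2006.07075 — 3 statements merged into one kernel-verified Lean document; each statement's English description precedes it below -/
import Mathlib

section
/- Let D, N, W be positive reals and κ, p in (0,1). If D ≥ |log(p)| · W · p^{-W} and N ≤ |log(κ)| · (1-p^W)^{1-D}, then [1 - (1-p^W)^D]^N ≥ κ. -/
/-!
Put `q = 1 - p^W`. Since `log q ≤ -p^W`, the hypothesis on `D` forces `q^D ≤ 1 - q`. For
`x = q^D` this gives `log (1 - x) ≥ -x / (1 - x) ≥ -x / q = -q^(D-1)`, so
`(1 - x)^N ≥ exp (-N q^(D-1))`, and the hypothesis on `N` says exactly that this is at least `κ`.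
-/

open Real

lemma one_sub_rpow_le_of_neg_log_le {s D : ℝ} (hs0 : 0 < s) (hs1 : s < 1)
    (h : -log s ≤ D * s) : (1 - s) ^ D ≤ s := by
  have hD : 0 ≤ D := by
    have := log_neg hs0 hs1
    nlinarith
  calc (1 - s) ^ D ≤ exp (-s) ^ D :=
        rpow_le_rpow (by linarith) (by linarith [add_one_le_exp (-s)]) hD
    _ = exp (-s * D) := (exp_mul _ _).symm
    _ ≤ exp (log s) := exp_le_exp.2 (by linarith)
    _ = s := exp_log hs0

lemma exp_neg_mul_div_le_one_sub_rpow {x N : ℝ} (hx1 : x < 1) (hN : 0 ≤ N) :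
    exp (-(N * (x / (1 - x)))) ≤ (1 - x) ^ N := by
  have hx : 0 < 1 - x := by linarith
  have hlog : -(x / (1 - x)) ≤ log (1 - x) := by
    have h := one_sub_inv_le_log_of_pos hx
    have : 1 - (1 - x)⁻¹ = -(x / (1 - x)) := by field_simp; ring
    linarith
  rw [rpow_def_of_pos hx]
  exact exp_le_exp.2 (by nlinarith)

lemma exp_neg_mul_rpow_sub_one_le_one_sub_rpow {q D N : ℝ} (hq0 : 0 < q) (hq : q ^ D ≤ 1 - q)
    (hN : 0 ≤ N) : exp (-(N * q ^ (D - 1))) ≤ (1 - q ^ D) ^ N := by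
  have hqD : 0 < q ^ D := rpow_pos_of_pos hq0 D
  have hratio : q ^ D / (1 - q ^ D) ≤ q ^ (D - 1) := by
    rw [rpow_sub_one hq0.ne']
    exact div_le_div_of_nonneg_left hqD.le hq0 (by linarith)
  calc exp (-(N * q ^ (D - 1))) ≤ exp (-(N * (q ^ D / (1 - q ^ D)))) :=
        exp_le_exp.2 (neg_le_neg (mul_le_mul_of_nonneg_left hratio hN))
    _ ≤ (1 - q ^ D) ^ N := exp_neg_mul_div_le_one_sub_rpow (by linarith) hN

theorem stmt2_general (D N W : ℝ) (hN0 : 0 < N) (hW0 : 0 < W)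
    (κ p : ℝ) (hκ : κ ∈ Set.Ioo (0 : ℝ) 1) (hp : p ∈ Set.Ioo (0 : ℝ) 1)
    (hD : |Real.log p| * W * p ^ (-W) ≤ D)
    (hN : N ≤ |Real.log κ| * (1 - p ^ W) ^ (1 - D)) :
    κ ≤ (1 - (1 - p ^ W) ^ D) ^ N := by
  obtain ⟨hκ0, hκ1⟩ := hκ
  obtain ⟨hp0, hp1⟩ := hp
  have hpW0 : 0 < p ^ W := rpow_pos_of_pos hp0 W
  have hpW1 : p ^ W < 1 := rpow_lt_one hp0.le hp1 hW0
  have hq : (1 - p ^ W) ^ D ≤ 1 - (1 - p ^ W) := by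
    rw [sub_sub_cancel]
    refine one_sub_rpow_le_of_neg_log_le hpW0 hpW1 ?_
    calc -log (p ^ W) = |log p| * W * p ^ (-W) * p ^ W := by
          rw [log_rpow hp0, abs_of_neg (log_neg hp0 hp1), mul_assoc _ (p ^ (-W)),
            ← rpow_add hp0, neg_add_cancel, rpow_zero]
          ring
      _ ≤ D * p ^ W := mul_le_mul_of_nonneg_right hD hpW0.le
  have hexponent : N * (1 - p ^ W) ^ (D - 1) ≤ -log κ := by
    have := mul_le_mul_of_nonneg_right hN (rpow_pos_of_pos (sub_pos.2 hpW1) (D - 1)).le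
    rwa [mul_assoc, ← rpow_add (sub_pos.2 hpW1), sub_add_sub_cancel', sub_self, rpow_zero,
      mul_one, abs_of_neg (log_neg hκ0 hκ1)] at this
  calc κ = exp (log κ) := (exp_log hκ0).symm
    _ ≤ exp (-(N * (1 - p ^ W) ^ (D - 1))) := exp_le_exp.2 (by linarith)
    _ ≤ (1 - (1 - p ^ W) ^ D) ^ N :=
        exp_neg_mul_rpow_sub_one_le_one_sub_rpow (sub_pos.2 hpW1) hq hN0.le

/-- Let `D, N, W` be positive reals and `κ, p ∈ (0,1)`. If `D ≥ |log p| ⬝ W ⬝ p^{-W}` and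
`N ≤ |log κ| ⬝ (1-p^W)^{1-D}`, then `(1 - (1-p^W)^D)^N ≥ κ`. -/
theorem stmt2 (D N W : ℝ) (hD0 : 0 < D) (hN0 : 0 < N) (hW0 : 0 < W)
    (κ p : ℝ) (hκ : κ ∈ Set.Ioo (0 : ℝ) 1) (hp : p ∈ Set.Ioo (0 : ℝ) 1)
    (hD : |Real.log p| * W * p ^ (-W) ≤ D)
    (hN : N ≤ |Real.log κ| * (1 - p ^ W) ^ (1 - D)) :
    κ ≤ (1 - (1 - p ^ W) ^ D) ^ N :=
  stmt2_general D N W hN0 hW0 κ p hκ hp hD hN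
end

section
/- Let a = (a_0,...,a_D) be a network architecture with D ≥ 3 hidden structure, let θ, ϑ be two parameter vectors, and let j be an index with 1 < j < D. Suppose all weights and biases of layer j of θ are strictly negative, all weights and biases of layer j of ϑ are strictly negative, and θ and ϑ agree on all entries corresponding to layers j+1 through D. Then the ReLU realization functions satisfy N_a^θ(0) = N_a^θ(x) = N_a^ϑ(x) = N_a^ϑ(0) for every input x in R^{a_0}. -/
open MeasureTheory ProbabilityTheory

noncomputable section

/-- `layerSum a j = ∑_{i=1}^{j} a_i (a_{i-1}+1)`, the number of parameters in layers `1,…,j`. -/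
def layerSum (a : ℕ → ℕ) (j : ℕ) : ℕ := ∑ i ∈ Finset.Icc 1 j, a i * (a (i - 1) + 1)

/-- The affine map of a layer with `m` outputs, `n` inputs, parameters read from `θ`
starting at offset `k` (weights row-wise, then biases). -/
def affApply (m n : ℕ) (θ : ℕ → ℝ) (k : ℕ) (y : Fin n → ℝ) : Fin m → ℝ :=
  fun i => (∑ l : Fin n, θ (k + i.val * n + l.val) * y l) + θ (k + m * n + i.val)

/-- Forward pass through the first `j` layers of the network, with componentwise ReLU
applied after each affine layer. -/
def fwd (a : ℕ → ℕ) (θ : ℕ → ℝ) (x : Fin (a 0) → ℝ) : (j : ℕ) → Fin (a j) → ℝ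
  | 0 => x
  | j + 1 => fun i => max (affApply (a (j + 1)) (a j) θ (layerSum a j) (fwd a θ x j) i) 0

/-- The realization `N_a^θ : ℝ^{a 0} → ℝ^{a D}` of the fully connected feedforward ReLU
network with architecture `a = (a 0, …, a D)` and parameters `θ`:
ReLU after each of the hidden layers `1,…,D-1`, linear read-out layer `D`. -/
def realization (a : ℕ → ℕ) (D : ℕ) (θ : ℕ → ℝ) (x : Fin (a 0) → ℝ) : Fin (a D) → ℝ :=
  affApply (a D) (a (D - 1)) θ (layerSum a (D - 1)) (fwd a θ x (D - 1))

/-- All weights and biases of layer `j` (the parameter block with indices in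
`[layerSum a (j-1), layerSum a j)`) are strictly negative. -/
def layerNeg (a : ℕ → ℕ) (j : ℕ) (θ : ℕ → ℝ) : Prop :=
  ∀ i, layerSum a (j - 1) ≤ i → i < layerSum a j → θ i < 0

/-- The inactive set `I_a`: some hidden layer `j` with `1 < j < D` has all its weights and
biases strictly negative. -/
def Inactive (a : ℕ → ℕ) (D : ℕ) (θ : ℕ → ℝ) : Prop :=
  ∃ j, 1 < j ∧ j < D ∧ layerNeg a j θ

end


/-!
The inputs of layer `j` are ReLU outputs of layer `j - 1 ≥ 1`, hence nonnegative; with negative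
weights and biases, every pre-activation of layer `j` is negative and its ReLU output is `0`,
whatever the input and the parameters of the earlier layers. From there on the forward pass
only reads the parameters of layers `j + 1, …, D`, on which `θ` and `ϑ` agree.
-/

lemma layerSum_succ (a : ℕ → ℕ) (k : ℕ) :
    layerSum a (k + 1) = layerSum a k + a (k + 1) * (a k + 1) := by
  rw [layerSum, Finset.sum_Icc_succ_top (by omega), Nat.add_sub_cancel]
  rfl

lemma layerSum_mono (a : ℕ → ℕ) : Monotone (layerSum a) :=
  fun _ _ h => Finset.sum_le_sum_of_subset (Finset.Icc_subset_Icc_right h)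

lemma eqOn_Ico_layerSum_succ (a : ℕ → ℕ) {θ ϑ : ℕ → ℝ} {j k : ℕ} (hjk : j ≤ k)
    (h : Set.EqOn θ ϑ (Set.Ico (layerSum a j) (layerSum a (k + 1)))) :
    Set.EqOn θ ϑ (Set.Ico (layerSum a j) (layerSum a k)) ∧
      Set.EqOn θ ϑ (Set.Ico (layerSum a k) (layerSum a k + a (k + 1) * (a k + 1))) :=
  ⟨h.mono (Set.Ico_subset_Ico_right (layerSum_mono a k.le_succ)),
    h.mono (Set.Ico_subset_Ico (layerSum_mono a hjk) (layerSum_succ a k).ge)⟩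

lemma weight_index_lt {m n : ℕ} (i : Fin m) (l : Fin n) : i.val * n + l.val < m * n := by
  nlinarith [i.isLt, l.isLt]

lemma affApply_congr {m n k : ℕ} {θ ϑ : ℕ → ℝ}
    (h : Set.EqOn θ ϑ (Set.Ico k (k + m * (n + 1)))) :
    affApply m n θ k = affApply m n ϑ k := by
  have hmn : m * (n + 1) = m * n + m := Nat.mul_succ m n
  funext y i
  simp only [affApply]
  congr 1
  · refine Finset.sum_congr rfl fun l _ => ?_
    have := weight_index_lt i l
    rw [h ⟨by omega, by omega⟩]
  · exact h ⟨by omega, by omega⟩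

lemma affApply_nonpos {m n k : ℕ} {θ : ℕ → ℝ}
    (hθ : ∀ p ∈ Set.Ico k (k + m * (n + 1)), θ p ≤ 0) {y : Fin n → ℝ} (hy : 0 ≤ y)
    (i : Fin m) : affApply m n θ k y i ≤ 0 := by
  have hmn : m * (n + 1) = m * n + m := Nat.mul_succ m n
  have hsum : ∑ l : Fin n, θ (k + i.val * n + l.val) * y l ≤ 0 := by
    refine Finset.sum_nonpos fun l _ => ?_
    have := weight_index_lt i l
    exact mul_nonpos_of_nonpos_of_nonneg (hθ _ ⟨by omega, by omega⟩) (hy l)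
  have hbias : θ (k + m * n + i.val) ≤ 0 := hθ _ ⟨by omega, by omega⟩
  exact add_nonpos hsum hbias

lemma fwd_succ (a : ℕ → ℕ) (θ : ℕ → ℝ) (x : Fin (a 0) → ℝ) (k : ℕ) :
    fwd a θ x (k + 1) =
      fun i => max (affApply (a (k + 1)) (a k) θ (layerSum a k) (fwd a θ x k) i) 0 :=
  rfl

lemma fwd_nonneg (a : ℕ → ℕ) (θ : ℕ → ℝ) (x : Fin (a 0) → ℝ) {k : ℕ} (hk : k ≠ 0) :
    0 ≤ fwd a θ x k := by
  obtain ⟨k, rfl⟩ := Nat.exists_eq_succ_of_ne_zero hk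
  exact fun i => le_max_right _ _

lemma fwd_eq_zero_of_layerNeg (a : ℕ → ℕ) {j : ℕ} (hj : 1 < j) {θ : ℕ → ℝ}
    (hθ : layerNeg a j θ) (x : Fin (a 0) → ℝ) : fwd a θ x j = 0 := by
  obtain ⟨k, rfl⟩ : ∃ k, j = k + 1 := ⟨j - 1, by omega⟩
  have hθ' : ∀ p ∈ Set.Ico (layerSum a k) (layerSum a k + a (k + 1) * (a k + 1)), θ p ≤ 0 :=
    fun p hp => (hθ p hp.1 (by rw [layerSum_succ]; exact hp.2)).le
  funext i
  exact max_eq_right (affApply_nonpos hθ' (fwd_nonneg a θ x (by omega)) i)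

lemma fwd_congr (a : ℕ → ℕ) {θ ϑ : ℕ → ℝ} {x x' : Fin (a 0) → ℝ} {j k : ℕ} (hjk : j ≤ k)
    (hagree : Set.EqOn θ ϑ (Set.Ico (layerSum a j) (layerSum a k)))
    (hj : fwd a θ x j = fwd a ϑ x' j) :
    fwd a θ x k = fwd a ϑ x' k := by
  induction k, hjk using Nat.le_induction with
  | base => exact hj
  | succ k hjk ih =>
    obtain ⟨hprefix, hlayer⟩ := eqOn_Ico_layerSum_succ a hjk hagree
    rw [fwd_succ, fwd_succ, ih hprefix, affApply_congr hlayer]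

lemma realization_congr (a : ℕ → ℕ) {D j : ℕ} (hjD : j < D) {θ ϑ : ℕ → ℝ}
    {x x' : Fin (a 0) → ℝ} (hagree : Set.EqOn θ ϑ (Set.Ico (layerSum a j) (layerSum a D)))
    (hj : fwd a θ x j = fwd a ϑ x' j) :
    realization a D θ x = realization a D ϑ x' := by
  obtain ⟨k, rfl⟩ : ∃ k, D = k + 1 := ⟨D - 1, by omega⟩
  obtain ⟨hprefix, hlayer⟩ := eqOn_Ico_layerSum_succ a (by omega : j ≤ k) hagree
  simp only [realization, Nat.add_one_sub_one]
  rw [fwd_congr a (by omega) hprefix hj, affApply_congr hlayer]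

lemma realization_eq_of_layerNeg (a : ℕ → ℕ) {D j : ℕ} (hj : 1 < j) (hjD : j < D)
    {θ ϑ : ℕ → ℝ} (hθ : layerNeg a j θ) (hϑ : layerNeg a j ϑ)
    (hagree : Set.EqOn θ ϑ (Set.Ico (layerSum a j) (layerSum a D))) (x x' : Fin (a 0) → ℝ) :
    realization a D θ x = realization a D ϑ x' :=
  realization_congr a hjD hagree <| by
    rw [fwd_eq_zero_of_layerNeg a hj hθ, fwd_eq_zero_of_layerNeg a hj hϑ]

theorem stmt4_general (a : ℕ → ℕ) (D : ℕ)
    (j : ℕ) (hj1 : 1 < j) (hjD : j < D) (θ ϑ : ℕ → ℝ)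
    (hθ : layerNeg a j θ) (hϑ : layerNeg a j ϑ)
    (hagree : ∀ i, layerSum a j ≤ i → i < layerSum a D → θ i = ϑ i)
    (x : Fin (a 0) → ℝ) :
    realization a D θ (fun _ => 0) = realization a D θ x ∧
    realization a D θ x = realization a D ϑ x ∧
    realization a D ϑ x = realization a D ϑ (fun _ => 0) :=
  ⟨realization_eq_of_layerNeg a hj1 hjD hθ hθ (Set.eqOn_refl _ _) _ _,
    realization_eq_of_layerNeg a hj1 hjD hθ hϑ (fun i hi => hagree i hi.1 hi.2) _ _,
    realization_eq_of_layerNeg a hj1 hjD hϑ hϑ (Set.eqOn_refl _ _) _ _⟩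

/-- If all weights and biases of layer `j` (with `1 < j < D`) of both `θ` and `ϑ` are
strictly negative, and `θ` and `ϑ` agree on all entries corresponding to layers `j+1,…,D`,
then `N_a^θ(0) = N_a^θ(x) = N_a^ϑ(x) = N_a^ϑ(0)` for every input `x`. -/
theorem stmt4 (a : ℕ → ℕ) (D : ℕ) (hD : 3 ≤ D) (hpos : ∀ i, i ≤ D → 0 < a i)
    (j : ℕ) (hj1 : 1 < j) (hjD : j < D) (θ ϑ : ℕ → ℝ)
    (hθ : layerNeg a j θ) (hϑ : layerNeg a j ϑ)
    (hagree : ∀ i, layerSum a j ≤ i → i < layerSum a D → θ i = ϑ i)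
    (x : Fin (a 0) → ℝ) :
    realization a D θ (fun _ => 0) = realization a D θ x ∧
    realization a D θ x = realization a D ϑ x ∧
    realization a D ϑ x = realization a D ϑ (fun _ => 0) :=
  stmt4_general a D j hj1 hjD θ ϑ hθ hϑ hagree x
end

section
/- If each coordinate of the random initialization Θ^1_0 ∈ R^{P(a)} is uniformly distributed on [-c,c] for some c > 0, then inf_{i} P(Θ^1_{0,i} < 0) = 1/2, and consequently (with D ≥ 3, W = max hidden width, N i.i.d. initializations, and gradient descent preserving inactivity) the probability that all N trajectories remain forever in the inactive set is at least [1 - (1 - 2^{-W(W+1)})^{D-2}]^N. -/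
open MeasureTheory ProbabilityTheory

/-!
If every weight and bias of a hidden layer `j ≥ 2` is negative, then, since the inputs of that
layer are ReLU outputs and hence nonnegative, every neuron of layer `j` outputs `0`, whatever the
parameters of the earlier layers. Perturbing one parameter of layer `j` a little keeps it negative,
so the loss is locally constant in it, its partial derivative vanishes and gradient descent never
moves it: the inactive set is invariant under the dynamics.

At initialization the hidden layers `2, …, D - 1` occupy disjoint blocks of independent
coordinates, each negative with probability `1/2`. Hence the events "layer `j` is entirely
negative" are independent, each of probability at least `2^{-W(W+1)}`, so a single trajectory
starts (and stays) inactive with probability at least `1 - (1 - 2^{-W(W+1)})^{D-2}`, and the `N`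
i.i.d. trajectories multiply these probabilities.
-/

namespace ProbabilityTheory

open Function

variable {Ω ι κ : Type*} {mΩ : MeasurableSpace Ω} {μ : Measure Ω}

theorem iIndep.iIndep_biSup_of_pairwise_disjoint {m : ι → MeasurableSpace Ω}
    (h_le : ∀ i, m i ≤ mΩ) (h : iIndep m μ) {T : κ → Set ι} (hT : Pairwise (Disjoint on T)) :
    iIndep (fun k => ⨆ i ∈ T k, m i) μ := by
  classical
  rw [iIndep_iff]
  intro s
  induction s using Finset.induction_on with
  | empty => simp [h.isProbabilityMeasure]
  | insert k s hk ih =>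
    intro E hE
    have hrest : MeasurableSet[⨆ i ∈ ⋃ j ∈ s, T j, m i] (⋂ j ∈ s, E j) :=
      Finset.measurableSet_biInter s fun j hj =>
        (biSup_mono fun i hi => Set.mem_biUnion hj hi : (⨆ i ∈ T j, m i) ≤ _) _
          (hE j (Finset.mem_insert_of_mem hj))
    have hdisj : Disjoint (T k) (⋃ j ∈ s, T j) :=
      Set.disjoint_iUnion₂_right.mpr fun j hj => hT (ne_of_mem_of_not_mem hj hk).symm
    rw [Finset.set_biInter_insert, Finset.prod_insert hk,
      (Indep_iff _ _ μ).mp (indep_iSup_of_disjoint h_le h hdisj) _ _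
        (hE k (Finset.mem_insert_self k s)) hrest,
      ih fun j hj => hE j (Finset.mem_insert_of_mem hj)]

theorem iIndepFun.iIndepSet_biInter_preimage {β : Type*} {mβ : MeasurableSpace β}
    {f : ι → Ω → β} (hf : iIndepFun f μ) (hmeas : ∀ i, Measurable (f i)) {T : κ → Finset ι}
    (hT : Pairwise (Disjoint on T)) {A : Set β} (hA : MeasurableSet A) :
    iIndepSet (fun k => ⋂ i ∈ T k, f i ⁻¹' A) μ := by
  have hblocks := ((iIndepFun_iff_iIndep _ _ μ).mp hf).iIndep_biSup_of_pairwise_disjoint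
    (fun i => (hmeas i).comap_le) (T := fun k => (T k : Set ι))
    (hT.mono fun _ _ => Finset.disjoint_coe.mpr)
  refine (iIndepSet_iff_meas_biInter fun k =>
    Finset.measurableSet_biInter _ fun i _ => hmeas i hA).mpr fun s =>
      hblocks.meas_biInter fun k _ => Finset.measurableSet_biInter _ fun i hi => ?_
  have hle : mβ.comap (f i) ≤ ⨆ i ∈ (T k : Set ι), mβ.comap (f i) :=
    le_iSup₂ (f := fun i (_ : i ∈ (T k : Set ι)) => mβ.comap (f i)) i hi
  exact hle _ (comap_measurable (f i) hA)

theorem iIndepSet.measure_biUnion {E : κ → Set Ω} (h : iIndepSet E μ)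
    (hE : ∀ k, MeasurableSet (E k)) (s : Finset κ) :
    μ (⋃ k ∈ s, E k) = 1 - ∏ k ∈ s, (1 - μ (E k)) := by
  have := h.isProbabilityMeasure
  have hcompl : μ (⋂ k ∈ s, (E k)ᶜ) = ∏ k ∈ s, (1 - μ (E k)) := by
    rw [((iIndepSet_iff_iIndep E μ).mp h).meas_biInter fun k _ =>
      (MeasurableSpace.measurableSet_generateFrom (Set.mem_singleton _)).compl]
    exact Finset.prod_congr rfl fun k _ => prob_compl_eq_one_sub (hE k)
  rw [← hcompl, ← Set.compl_iUnion₂,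
    prob_compl_eq_one_sub (s.measurableSet_biUnion fun k _ => hE k),
    ENNReal.sub_sub_cancel ENNReal.one_ne_top prob_le_one]

theorem iIndepFun.measure_iInter_preimage_eq_pow {β : Type*} {mβ : MeasurableSpace β} {N : ℕ}
    {X : Fin N → Ω → β} {Y : Ω → β} (h : iIndepFun X μ)
    (hXY : ∀ n, IdentDistrib (X n) Y μ μ) {S : Set β} (hS : MeasurableSet S) :
    μ (⋂ n, X n ⁻¹' S) = μ (Y ⁻¹' S) ^ N := by
  simpa [(hXY _).measure_mem_eq hS] using
    h.measure_inter_preimage_eq_mul Finset.univ (sets := fun _ => S) fun _ _ => hS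

lemma measure_lt_zero_of_map_eq_uniform {X : Ω → ℝ} (hX : Measurable X) {c : ℝ} (hc : 0 < c)
    (h : μ.map X = (ENNReal.ofReal (2 * c))⁻¹ • volume.restrict (Set.Icc (-c) c)) :
    μ {ω | X ω < 0} = 2⁻¹ := by
  have hc' : ENNReal.ofReal c ≠ 0 := (ENNReal.ofReal_pos.mpr hc).ne'
  change μ (X ⁻¹' Set.Iio 0) = 2⁻¹
  rw [← Measure.map_apply hX measurableSet_Iio, h, Measure.smul_apply,
    Measure.restrict_apply measurableSet_Iio,
    show Set.Iio 0 ∩ Set.Icc (-c) c = Set.Ico (-c) 0 by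
      ext x; simp only [Set.mem_inter_iff, Set.mem_Iio, Set.mem_Icc, Set.mem_Ico]; grind,
    Real.volume_Ico, ENNReal.ofReal_mul zero_le_two, smul_eq_mul, sub_neg_eq_add, zero_add,
    ENNReal.mul_inv (by simp) (by simp), mul_assoc,
    ENNReal.inv_mul_cancel hc' ENNReal.ofReal_ne_top]
  simp

end ProbabilityTheory

theorem ENNReal.ofReal_one_sub_one_sub_pow {p : ℝ} (hp0 : 0 ≤ p) (hp1 : p ≤ 1) (k n : ℕ) :
    ENNReal.ofReal ((1 - (1 - p) ^ k) ^ n) = (1 - (1 - ENNReal.ofReal p) ^ k) ^ n := by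
  have hk1 : (1 - p) ^ k ≤ 1 := pow_le_one₀ (by linarith) (by linarith)
  rw [ENNReal.ofReal_pow (by linarith), ENNReal.ofReal_sub _ (pow_nonneg (by linarith) _),
    ENNReal.ofReal_one, ENNReal.ofReal_pow (by linarith), ENNReal.ofReal_sub _ hp0,
    ENNReal.ofReal_one]

namespace ReLUNet

open Filter Function Topology
open scoped ENNReal

variable {a : ℕ → ℕ}

lemma layerSum_succ (a : ℕ → ℕ) (j : ℕ) :
    layerSum a (j + 1) = layerSum a j + a (j + 1) * (a j + 1) := by
  simp [layerSum, Finset.sum_Icc_succ_top]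

lemma layerSum_mono (a : ℕ → ℕ) : Monotone (layerSum a) :=
  monotone_nat_of_le_succ fun j => by rw [layerSum_succ]; omega

lemma layerSum_pos {D : ℕ} (hD : 1 ≤ D) (haD : 0 < a D) : 0 < layerSum a D := by
  obtain ⟨E, rfl⟩ : ∃ E, D = E + 1 := ⟨D - 1, by omega⟩
  rw [layerSum_succ]
  positivity

lemma weight_index_lt_layerSum_succ (j : ℕ) (i : Fin (a (j + 1))) (l : Fin (a j)) :
    layerSum a j + i.val * a j + l.val < layerSum a (j + 1) := by
  have hi : (i.val + 1) * a j ≤ a (j + 1) * a j := Nat.mul_le_mul_right _ i.isLt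
  rw [layerSum_succ]
  nlinarith [l.isLt]

lemma bias_index_lt_layerSum_succ (j : ℕ) (i : Fin (a (j + 1))) :
    layerSum a j + a (j + 1) * a j + i.val < layerSum a (j + 1) := by
  rw [layerSum_succ]
  nlinarith [i.isLt]

lemma affApply_congr {m n k : ℕ} {θ θ' : ℕ → ℝ} (h : ∀ i, k ≤ i → θ i = θ' i) :
    affApply m n θ k = affApply m n θ' k := by
  ext y i
  simp only [affApply, h _ (Nat.le_add_right _ _), Nat.add_assoc]

lemma fwd_nonneg (θ : ℕ → ℝ) (x : Fin (a 0) → ℝ) {j : ℕ} (hj : 1 ≤ j) (i : Fin (a j)) :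
    0 ≤ fwd a θ x j i := by
  obtain ⟨k, rfl⟩ : ∃ k, j = k + 1 := ⟨j - 1, by omega⟩
  exact le_max_right _ _

lemma fwd_eq_zero_of_layerNeg {θ : ℕ → ℝ} (x : Fin (a 0) → ℝ) {j : ℕ} (hj : 2 ≤ j)
    (hθ : layerNeg a j θ) : fwd a θ x j = 0 := by
  obtain ⟨k, rfl⟩ : ∃ k, j = k + 1 := ⟨j - 1, by omega⟩
  funext i
  refine max_eq_right (le_of_lt ?_)
  have hbias := hθ _ (by simp; omega) (bias_index_lt_layerSum_succ k i)
  have hweights : ∑ l : Fin (a k), θ (layerSum a k + i.val * a k + l.val) * fwd a θ x k l ≤ 0 :=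
    Finset.sum_nonpos fun l _ => mul_nonpos_of_nonpos_of_nonneg
      (hθ _ (by simp; omega) (weight_index_lt_layerSum_succ k i l)).le
      (fwd_nonneg θ x (by omega) l)
  simp only [affApply]
  linarith

lemma fwd_congr_of_layerNeg {θ θ' : ℕ → ℝ} (x : Fin (a 0) → ℝ) {j : ℕ} (hj : 2 ≤ j)
    (hθ : layerNeg a j θ) (hθ' : layerNeg a j θ') (h : ∀ i, layerSum a j ≤ i → θ i = θ' i)
    {k : ℕ} (hjk : j ≤ k) : fwd a θ x k = fwd a θ' x k := by
  induction k, hjk using Nat.le_induction with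
  | base => rw [fwd_eq_zero_of_layerNeg x hj hθ, fwd_eq_zero_of_layerNeg x hj hθ']
  | succ k hjk ih =>
    have hk : ∀ i, layerSum a k ≤ i → θ i = θ' i :=
      fun i hi => h i (layerSum_mono a hjk |>.trans hi)
    funext i
    simp only [fwd, ih, affApply_congr hk]

lemma realization_congr_of_layerNeg {D j : ℕ} {θ θ' : ℕ → ℝ} (hj : 2 ≤ j) (hjD : j ≤ D - 1)
    (hθ : layerNeg a j θ) (hθ' : layerNeg a j θ') (h : ∀ i, layerSum a j ≤ i → θ i = θ' i) :
    realization a D θ = realization a D θ' := by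
  funext x
  have hD : ∀ i, layerSum a (D - 1) ≤ i → θ i = θ' i :=
    fun i hi => h i (layerSum_mono a hjD |>.trans hi)
  rw [realization, realization, fwd_congr_of_layerNeg x hj hθ hθ' h hjD, affApply_congr hD]

lemma realization_update_eventuallyEq {D j i : ℕ} {θ : ℕ → ℝ} (hj : 2 ≤ j) (hjD : j ≤ D - 1)
    (hθ : layerNeg a j θ) (hi : layerSum a (j - 1) ≤ i) (hi' : i < layerSum a j) :
    (fun s => realization a D (Function.update θ i s)) =ᶠ[𝓝 (θ i)]
      fun _ => realization a D θ := by
  filter_upwards [Iio_mem_nhds (hθ i hi hi')] with s hs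
  refine realization_congr_of_layerNeg hj hjD (fun k hk hk' => ?_) hθ
    fun k hk => Function.update_of_ne (by omega) s θ
  rcases eq_or_ne k i with rfl | hki
  · simpa using hs
  · rw [Function.update_of_ne hki]; exact hθ k hk hk'

lemma layerNeg_gradient_step {D j : ℕ} {ℓ : (ℕ → ℝ) → ℝ} (hj : 2 ≤ j) (hjD : j ≤ D - 1)
    (hℓ : ∀ θ θ', realization a D θ = realization a D θ' → ℓ θ = ℓ θ')
    {θ g : ℕ → ℝ}
    (hg : ∀ i, DifferentiableAt ℝ (fun s => ℓ (Function.update θ i s)) (θ i) →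
      g i = deriv (fun s => ℓ (Function.update θ i s)) (θ i))
    (γ : ℝ) (hθ : layerNeg a j θ) : layerNeg a j (fun i => θ i - γ * g i) := by
  intro i hi hi'
  have hconst : (fun s => ℓ (Function.update θ i s)) =ᶠ[𝓝 (θ i)] fun _ => ℓ θ :=
    (realization_update_eventuallyEq hj hjD hθ hi hi').mono fun s hs => hℓ _ _ hs
  have hgi : g i = 0 := by
    rw [hg i ((differentiableAt_const _).congr_of_eventuallyEq hconst), hconst.deriv_eq,
      deriv_const]
  simpa [hgi] using hθ i hi hi'

theorem inactive_gradient_descent {D : ℕ} (ℓ : ℕ → (ℕ → ℝ) → ℝ)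
    (hℓ : ∀ t θ θ', realization a D θ = realization a D θ' → ℓ t θ = ℓ t θ')
    (g : ℕ → (ℕ → ℝ) → ℕ → ℝ)
    (hg : ∀ t θ i, DifferentiableAt ℝ (fun s => ℓ t (Function.update θ i s)) (θ i) →
      g t θ i = deriv (fun s => ℓ t (Function.update θ i s)) (θ i))
    (γ : ℕ → ℝ) {θ : ℕ → ℕ → ℝ} (hθ : ∀ t i, θ (t + 1) i = θ t i - γ (t + 1) * g (t + 1) (θ t) i)
    (h0 : Inactive a D (θ 0)) (t : ℕ) : Inactive a D (θ t) := by
  obtain ⟨j, hj, hjD, hneg⟩ := h0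
  refine ⟨j, hj, hjD, ?_⟩
  induction t with
  | zero => exact hneg
  | succ t ih =>
    rw [show θ (t + 1) = _ from funext (hθ t)]
    exact layerNeg_gradient_step (by omega) (by omega) (hℓ (t + 1)) (hg (t + 1) (θ t)) _ ih

def layerBlock (a : ℕ → ℕ) (M j : ℕ) : Finset (Fin M) :=
  {i | layerSum a (j - 1) ≤ i ∧ (i : ℕ) < layerSum a j}

lemma pairwise_disjoint_layerBlock (a : ℕ → ℕ) (M : ℕ) : Pairwise (Disjoint on layerBlock a M) :=
  (pairwise_disjoint_on _).mpr fun j k hjk => Finset.disjoint_left.mpr fun i hij hik => by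
    simp only [layerBlock, Finset.mem_filter, Finset.mem_univ, true_and] at hij hik
    have := layerSum_mono a (show j ≤ k - 1 by omega)
    omega

lemma card_layerBlock_le (a : ℕ → ℕ) (M j : ℕ) :
    (layerBlock a M j).card ≤ a j * (a (j - 1) + 1) := by
  calc (layerBlock a M j).card
      ≤ (Finset.Ico (layerSum a (j - 1)) (layerSum a j)).card :=
        Finset.card_le_card_of_injOn Fin.val (fun i hi => by simpa [layerBlock] using hi)
          Fin.val_injective.injOn
    _ ≤ a j * (a (j - 1) + 1) := by
        rcases j with _ | j
        · simp
        · simp [layerSum_succ]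

lemma layerNeg_iff_forall_mem_layerBlock {M j : ℕ} (hj : layerSum a j ≤ M) {θ : ℕ → ℝ} :
    layerNeg a j θ ↔ ∀ i ∈ layerBlock a M j, θ i < 0 := by
  simp only [layerNeg, layerBlock, Finset.mem_filter, Finset.mem_univ, true_and, and_imp]
  exact ⟨fun h i => h i, fun h i hi hi' => h ⟨i, by omega⟩ hi hi'⟩

lemma measurableSet_inactive (a : ℕ → ℕ) (D : ℕ) : MeasurableSet {θ : ℕ → ℝ | Inactive a D θ} := by
  simp only [Inactive, layerNeg, Set.ofPred_exists, Set.ofPred_and, Set.ofPred_forall]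
  measurability

theorem le_measure_inactive {Ω : Type*} {mΩ : MeasurableSpace Ω} {μ : Measure Ω}
    {D W : ℕ} {X : Ω → ℕ → ℝ} (hX : Measurable X)
    (hindep : iIndepFun (fun (i : Fin (layerSum a D)) ω => X ω i) μ) {p : ℝ≥0∞}
    (hp : ∀ i, μ {ω | X ω i < 0} = p) (hW : ∀ j, 1 ≤ j → j ≤ D - 1 → a j ≤ W) :
    1 - (1 - p ^ (W * (W + 1))) ^ (D - 2) ≤ μ {ω | Inactive a D (X ω)} := by
  set B := layerBlock a (layerSum a D)
  set E : ℕ → Set Ω := fun j => ⋂ i ∈ B j, (fun ω => X ω i) ⁻¹' Set.Iio 0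
  have hE_meas : ∀ j, MeasurableSet (E j) :=
    fun j => Finset.measurableSet_biInter _ fun i _ => hX.eval measurableSet_Iio
  have hinactive : {ω | Inactive a D (X ω)} = ⋃ j ∈ Finset.Ioo 1 D, E j := by
    ext ω
    simp only [Set.mem_ofPred_eq, Set.mem_iUnion, Inactive, Finset.mem_Ioo, exists_prop, and_assoc]
    refine exists_congr fun j => and_congr_right fun _ => and_congr_right fun hjD => ?_
    simpa [E] using layerNeg_iff_forall_mem_layerBlock (layerSum_mono a hjD.le)
  have := hindep.isProbabilityMeasure
  have hE_prob : ∀ j ∈ Finset.Ioo 1 D, p ^ (W * (W + 1)) ≤ μ (E j) := fun j hj => by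
    have hj' := Finset.mem_Ioo.mp hj
    rw [hindep.measure_inter_preimage_eq_mul _ fun _ _ => measurableSet_Iio,
      Finset.prod_eq_pow_card
        (f := fun i : Fin (layerSum a D) => μ ((fun ω => X ω i) ⁻¹' Set.Iio 0)) fun i _ => hp i]
    refine pow_le_pow_of_le_one zero_le (hp 0 ▸ prob_le_one) ((card_layerBlock_le a _ j).trans ?_)
    exact Nat.mul_le_mul (hW j (by omega) (by omega))
      (Nat.succ_le_succ (hW _ (by omega) (by omega)))
  have hblocks : iIndepSet E μ := hindep.iIndepSet_biInter_preimage (fun i => hX.eval)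
    (pairwise_disjoint_layerBlock a _) measurableSet_Iio
  rw [hinactive, hblocks.measure_biUnion hE_meas,
    show D - 2 = (Finset.Ioo 1 D).card by simp [Nat.sub_sub], ← Finset.prod_const]
  exact tsub_le_tsub_left (Finset.prod_le_prod' fun j hj => tsub_le_tsub_left (hE_prob j hj) 1) 1

end ReLUNet

/-- If each coordinate of the random initialization is uniformly distributed on `[-c,c]`,
then `inf_i P(Θ¹₀ᵢ < 0) = 1/2`, and the probability that all `N` gradient descent
trajectories remain forever in the inactive set is at least
`(1 - (1 - 2^{-W(W+1)})^{D-2})^N`. -/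
theorem stmt11 {Ω : Type*} [MeasurableSpace Ω] (μ : Measure Ω) [IsProbabilityMeasure μ]
    (a : ℕ → ℕ) (D : ℕ) (hD : 3 ≤ D) (haD : a D = 1)
    (N : ℕ) (𝔠 : ℝ → ℝ)
    -- the empirical loss functionals, the losses on parameter space, and the gradients
    (F : ℕ → ℕ → Ω → ((Fin (a 0) → ℝ) → ℝ))
    (L : ℕ → ℕ → (ℕ → ℝ) → Ω → ℝ)
    (hL : ∀ n t θ ω, L n t θ ω = F n t ω (fun x => 𝔠 (realization a D θ x ⟨0, by omega⟩)))
    (G : ℕ → ℕ → (ℕ → ℝ) → Ω → ℕ → ℝ)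
    (hG : ∀ n t (θ : ℕ → ℝ) (ω : Ω) (i : ℕ),
      DifferentiableAt ℝ (fun s => L n t (Function.update θ i s) ω) (θ i) →
      G n t θ ω i = deriv (fun s => L n t (Function.update θ i s) ω) (θ i))
    -- the SGD trajectories
    (γ : ℕ → ℝ) (Θ : ℕ → ℕ → Ω → ℕ → ℝ)
    (hΘ : ∀ n t ω i, Θ n (t + 1) ω i = Θ n t ω i - γ (t + 1) * G n (t + 1) (Θ n t ω) ω i)
    -- the initializations are i.i.d. with independent coordinates
    (hmeas : ∀ n, Measurable (Θ n 0))
    (hindep : iIndepFun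
      (fun (n : Fin N) ω => Θ (n.val + 1) 0 ω) μ)
    (hident : ∀ n, 1 ≤ n → n ≤ N → IdentDistrib (Θ n 0) (Θ 1 0) μ μ)
    (hcoord : iIndepFun
      (fun (i : Fin (layerSum a D)) ω => Θ 1 0 ω i.val) μ)
    -- each coordinate of the initialization is uniformly distributed on `[-c,c]`
    (c : ℝ) (hc : 0 < c)
    (hunif : ∀ i : ℕ, Measure.map (fun ω => Θ 1 0 ω i) μ =
      (ENNReal.ofReal (2 * c))⁻¹ • MeasureTheory.volume.restrict (Set.Icc (-c) c))
    (W : ℕ) (hW : W = (Finset.Icc 1 (D - 1)).sup a) :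
    (⨅ i : Fin (layerSum a D), (μ {ω | Θ 1 0 ω i.val < 0}).toReal) = 1 / 2 ∧
    ENNReal.ofReal ((1 - (1 - (1 / 2 : ℝ) ^ (W * (W + 1))) ^ (D - 2)) ^ N) ≤
      μ {ω | ∀ n, 1 ≤ n → n ≤ N → ∀ t, Inactive a D (Θ n t ω)} := by
  have hhalf : ∀ i, μ {ω | Θ 1 0 ω i < 0} = 2⁻¹ :=
    fun i => measure_lt_zero_of_map_eq_uniform (hmeas 1).eval hc (hunif i)
  refine ⟨?_, ?_⟩
  · have : Nonempty (Fin (layerSum a D)) := ⟨⟨0, ReLUNet.layerSum_pos (by omega) (by omega)⟩⟩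
    simp [hhalf]
  have hinit := ReLUNet.le_measure_inactive (hmeas 1) hcoord hhalf (W := W)
    fun j hj hj' => hW ▸ Finset.le_sup (Finset.mem_Icc.mpr ⟨hj, hj'⟩)
  calc ENNReal.ofReal ((1 - (1 - (1 / 2 : ℝ) ^ (W * (W + 1))) ^ (D - 2)) ^ N)
      = (1 - (1 - 2⁻¹ ^ (W * (W + 1))) ^ (D - 2)) ^ N := by
        rw [ENNReal.ofReal_one_sub_one_sub_pow (by positivity)
            (pow_le_one₀ (by norm_num) (by norm_num)),
          ENNReal.ofReal_pow (by norm_num), one_div, ENNReal.ofReal_inv_of_pos two_pos,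
          ENNReal.ofReal_ofNat]
    _ ≤ μ {ω | Inactive a D (Θ 1 0 ω)} ^ N := by gcongr
    _ = μ (⋂ n : Fin N, (Θ (n + 1) 0) ⁻¹' {θ | Inactive a D θ}) :=
        (hindep.measure_iInter_preimage_eq_pow (fun n => hident _ (by omega) n.isLt)
          (ReLUNet.measurableSet_inactive a D)).symm
    _ ≤ μ {ω | ∀ n, 1 ≤ n → n ≤ N → ∀ t, Inactive a D (Θ n t ω)} := by
        refine measure_mono fun ω hω n hn hnN => ?_
        have h0 : Inactive a D (Θ n 0 ω) := by
          simpa [Nat.sub_add_cancel hn] using Set.mem_iInter.mp hω ⟨n - 1, by omega⟩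
        exact ReLUNet.inactive_gradient_descent (fun t θ => L n t θ ω)
          (fun t θ θ' h => by simp only [hL, h]) (fun t θ => G n t θ ω)
          (fun t θ i => hG n t θ ω i) γ (fun t i => hΘ n t ω i) h0
end
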